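/- Fix an integer c ≥ 2 and let G = A + M (with A a spanning double tree and E(G) = E(A) ⊔ E(M)) be a finite graph with no c-balanced decomposition G = G1 ⊔ G2 in which A ∩ G1 and A ∩ G2 are spanning trees, chosen so that e(M) is minimal and, subject to this, |V(G)| is minimal. Then no vertex of G is both adjacent to a vertex of degree 2 and incident to an edge of M. -/

import Mathlib

/-- A multigraph without loops: edges `E` with an endpoint map into unordered
pairs of vertices, no edge being a loop. -/
structure Multigraph (V : Type*) (E : Type*) where
  ends : E → Sym2 V
  loopless : ∀ e, ¬ (ends e).IsDiag

namespace Multigraph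

variable {V E : Type*}

/-- `a` and `b` are joined by an edge belonging to the edge set `S`. -/
def Adj (G : Multigraph V E) (S : Set E) (a b : V) : Prop :=
  ∃ e ∈ S, G.ends e = s(a, b)

/-- Reachability in the spanning subgraph with edge set `S`. -/
def Reachable (G : Multigraph V E) (S : Set E) (a b : V) : Prop :=
  Relation.ReflTransGen (G.Adj S) a b

/-- The spanning subgraph with edge set `S` is connected. -/
def Connected (G : Multigraph V E) (S : Set E) : Prop :=
  ∀ a b : V, G.Reachable S a b

/-- The spanning subgraph with edge set `S` is acyclic: every edge of `S`
is a bridge of `S`. -/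
def Acyclic (G : Multigraph V E) (S : Set E) : Prop :=
  ∀ e ∈ S, ∀ a b : V, G.ends e = s(a, b) → ¬ G.Reachable (S \ {e}) a b

/-- `S` is the edge set of a spanning tree: connected and acyclic. -/
def IsSpanningTree (G : Multigraph V E) (S : Set E) : Prop :=
  G.Connected S ∧ G.Acyclic S

/-- The edges of `S` incident to `v`. -/
def incEdges (G : Multigraph V E) (S : Set E) (v : V) : Set E :=
  {e ∈ S | v ∈ G.ends e}

/-- The degree of `v` in the spanning subgraph with edge set `S`. -/
noncomputable def deg (G : Multigraph V E) (S : Set E) (v : V) : ℕ :=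
  (G.incEdges S v).ncard

/-- `T1, T2` form a double tree decomposition of `G`: they partition the
edges of `G` and are both spanning trees. -/
def IsDTD (G : Multigraph V E) (T1 T2 : Set E) : Prop :=
  T1 ∪ T2 = Set.univ ∧ Disjoint T1 T2 ∧ G.IsSpanningTree T1 ∧ G.IsSpanningTree T2

/-- `G` is a double tree: the edge-disjoint union of two spanning trees. -/
def IsDoubleTree (G : Multigraph V E) : Prop :=
  ∃ T1 T2, G.IsDTD T1 T2

/-- A decomposition into two spanning subgraphs is `c`-balanced if at each
vertex the two degrees differ by at most `c`. -/
def Balanced (G : Multigraph V E) (c : ℕ) (S1 S2 : Set E) : Prop :=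
  ∀ v : V, |(G.deg S1 v : ℤ) - (G.deg S2 v : ℤ)| ≤ (c : ℤ)

end Multigraph

namespace Multigraph

variable {V E : Type*}

/-- `G` admits no `c`-balanced double tree decomposition. -/
def NoBalancedDTD (c : ℕ) (G : Multigraph V E) : Prop :=
  ¬ ∃ T1 T2 : Set E, G.IsDTD T1 T2 ∧ G.Balanced c T1 T2

/-- `v` is big: its degree exceeds `c + 2`. -/
def Big (G : Multigraph V E) (c : ℕ) (v : V) : Prop :=
  c + 2 < G.deg Set.univ v

/-- `v` is small: its degree is at most `c + 2`. -/
def Small (G : Multigraph V E) (c : ℕ) (v : V) : Prop :=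
  G.deg Set.univ v ≤ c + 2

/-- `u` and `z` are joined by a double edge. -/
def DoubleEdge (G : Multigraph V E) (u z : V) : Prop :=
  ∃ e1 e2 : E, e1 ≠ e2 ∧ G.ends e1 = s(u, z) ∧ G.ends e2 = s(u, z)

/-- `u` is a bad 3-vertex: it has degree 3, a small neighbour, and is joined
to a big vertex by a double edge. -/
def Bad3 (G : Multigraph V E) (c : ℕ) (u : V) : Prop :=
  G.deg Set.univ u = 3 ∧
  (∃ w, G.Adj Set.univ u w ∧ G.Small c w) ∧
  (∃ z, G.DoubleEdge u z ∧ G.Big c z)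

/-- `u` is a poor 3-vertex: it has degree 3 and three distinct neighbours,
two big and one small. -/
def Poor3 (G : Multigraph V E) (c : ℕ) (u : V) : Prop :=
  G.deg Set.univ u = 3 ∧
  ∃ x y s : V, x ≠ y ∧ x ≠ s ∧ y ≠ s ∧
    G.Adj Set.univ u x ∧ G.Adj Set.univ u y ∧ G.Adj Set.univ u s ∧
    G.Big c x ∧ G.Big c y ∧ G.Small c s

end Multigraph

namespace Multigraph

variable {V E : Type*}

/-- `G` admits a `c`-balanced decomposition `G1 ⊔ G2` such that `A ∩ G1` and
`A ∩ G2` are spanning trees. -/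
def GoodDecomp (G : Multigraph V E) (c : ℕ) (A : Set E) : Prop :=
  ∃ G1 G2 : Set E, G1 ∪ G2 = Set.univ ∧ Disjoint G1 G2 ∧
    G.Balanced c G1 G2 ∧
    G.IsSpanningTree (A ∩ G1) ∧ G.IsSpanningTree (A ∩ G2)

/-- The setup `G = A + M` being a counterexample: `A, M` partition the edges
of `G`, `A` is a spanning double tree, and `G` has no `c`-balanced
decomposition whose restrictions to `A` are spanning trees. -/
def AMCounterexample (G : Multigraph V E) (c : ℕ) (A M : Set E) : Prop :=
  A ∪ M = Set.univ ∧ Disjoint A M ∧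
  (∃ T1 T2 : Set E, T1 ∪ T2 = A ∧ Disjoint T1 T2 ∧
    G.IsSpanningTree T1 ∧ G.IsSpanningTree T2) ∧
  ¬ G.GoodDecomp c A

end Multigraph

/-!
Let `u` be a degree-2 neighbour of `v` and `e = vx ∈ M`. As `u` lies on both spanning trees
`T1, T2` of `A`, it is a leaf of each: its edges are `e1 = uv ∈ T1` and `e2 = uw ∈ T2`.

If `w ≠ x`, move `e` to `wx` and delete `u`. This keeps `e(M)` and loses a vertex. A good
decomposition of the smaller graph lifts to `G` by giving `e2` to the class containing `wx`
and `e1` to the other; no degree difference changes.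

If `w = x`, delete `u` and `e`, which lowers `e(M)`. A good decomposition lifts by giving
`e1, e` to the class that is smaller at `v` and `e2` to the other; only the difference at `v`
changes, by `2`, which `c ≥ 2` absorbs.

In both cases the smaller graph is again a counterexample, contradicting minimality.
-/

lemma Sym2.mem_map_iff_of_injective {α β : Type*} {f : α → β} (hf : f.Injective)
    {z : Sym2 α} {y : α} : f y ∈ z.map f ↔ y ∈ z := by
  rw [Sym2.mem_map]
  exact ⟨fun ⟨x, hx, hxy⟩ => hf hxy ▸ hx, fun hy => ⟨y, hy, rfl⟩⟩

namespace Multigraph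

variable {V E : Type*} {G : Multigraph V E} {S : Set E} {a b u v : V}

section Reachable

lemma ne_of_ends_eq {g : E} (h : G.ends g = s(a, b)) : a ≠ b := fun hab =>
  G.loopless g (by rw [h, Sym2.mk_isDiag_iff]; exact hab)

lemma Adj.symm (h : G.Adj S a b) : G.Adj S b a := by
  obtain ⟨g, hg, hgE⟩ := h
  exact ⟨g, hg, hgE.trans Sym2.eq_swap⟩

lemma Adj.mono {T : Set E} (hST : S ⊆ T) (h : G.Adj S a b) : G.Adj T a b := by
  obtain ⟨g, hg, hgE⟩ := h
  exact ⟨g, hST hg, hgE⟩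

lemma Reachable.single (h : G.Adj S a b) : G.Reachable S a b :=
  Relation.ReflTransGen.single h

lemma Reachable.symm (h : G.Reachable S a b) : G.Reachable S b a := by
  induction h with
  | refl => exact Relation.ReflTransGen.refl
  | tail _ hbc ih => exact ih.head hbc.symm

lemma Reachable.trans {c : V} (h : G.Reachable S a b) (h' : G.Reachable S b c) :
    G.Reachable S a c :=
  Relation.ReflTransGen.trans h h'

lemma Reachable.mono {T : Set E} (hST : S ⊆ T) (h : G.Reachable S a b) : G.Reachable T a b :=
  Relation.ReflTransGen.mono (fun _ _ => Adj.mono hST) _ _ h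

lemma Acyclic.subset {T : Set E} (hT : G.Acyclic T) (hST : S ⊆ T) : G.Acyclic S :=
  fun g hg a b hgE h => hT g (hST hg) a b hgE (h.mono (Set.sdiff_subset_sdiff_left hST))

lemma Reachable.map {V' E' : Type*} {H : Multigraph V' E'} {f : V → V'} {φ : E → E'}
    (hφ : ∀ g, H.ends (φ g) = (G.ends g).map f) (h : G.Reachable S a b) :
    H.Reachable (φ '' S) (f a) (f b) := by
  refine Relation.ReflTransGen.lift f (fun x y ⟨g, hg, hgE⟩ => ?_) _ _ h
  exact ⟨φ g, Set.mem_image_of_mem φ hg, by rw [hφ, hgE, Sym2.map_mk]⟩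

lemma Acyclic.of_map {V' E' : Type*} {H : Multigraph V' E'} {T : Set E'} {f : V → V'}
    {φ : E → E'} (hφ : ∀ g, H.ends (φ g) = (G.ends g).map f) (hinj : φ.Injective)
    (hT : H.Acyclic T) (hST : φ '' S ⊆ T) : G.Acyclic S := by
  intro g hg a b hgE h
  refine (hT.subset hST) (φ g) (Set.mem_image_of_mem φ hg) (f a) (f b)
    (by rw [hφ, hgE, Sym2.map_mk]) ?_
  rw [← Set.image_singleton, ← Set.image_sdiff hinj]
  exact h.map hφ

lemma Reachable.eq_of_forall_notMem (hu : ∀ g ∈ S, u ∉ G.ends g)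
    (h : G.Reachable S u b) : b = u := by
  rcases h.cases_head with h | ⟨c, ⟨g, hg, hgE⟩, _⟩
  · exact h.symm
  · exact absurd (hgE ▸ Sym2.mem_mk_left u c) (hu g hg)

lemma exists_mem_ends_of_connected (hS : G.Connected S) (huv : u ≠ v) :
    ∃ g ∈ S, u ∈ G.ends g := by
  rcases (hS u v).cases_head with h | ⟨y, ⟨g, hg, hgE⟩, -⟩
  exacts [absurd h huv, ⟨g, hg, hgE ▸ Sym2.mem_mk_left u y⟩]

/-- A visit of `u` by a walk in `S` is a detour `v u v` along `e0`, which can be cut out. -/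
lemma Reachable.sdiff_of_unique {e0 : E} (he0 : G.ends e0 = s(u, v))
    (hu : ∀ g ∈ S, u ∈ G.ends g → g = e0) (h : G.Reachable S a b) (ha : a ≠ u)
    (hb : b ≠ u) : G.Reachable (S \ {e0}) a b := by
  classical
  let f : V → V := fun y => if y = u then v else y
  suffices G.Reachable (S \ {e0}) (f a) (f b) by simpa [f, ha, hb] using this
  refine Relation.ReflTransGen.lift' f (fun x y ⟨g, hg, hgE⟩ => ?_) _ _ h
  by_cases hge : g = e0
  · subst hge
    have hf : f x = v ∧ f y = v := by
      rcases Sym2.eq_iff.mp (hgE.symm.trans he0) with ⟨rfl, rfl⟩ | ⟨rfl, rfl⟩ <;> simp [f]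
    simp only [Function.onFun, hf]
    exact Relation.ReflTransGen.refl
  · have hx : x ≠ u := fun hx => hge (hu g hg (hgE ▸ hx ▸ Sym2.mem_mk_left x y))
    have hy : y ≠ u := fun hy => hge (hu g hg (hgE ▸ hy ▸ Sym2.mem_mk_right x y))
    simp only [Function.onFun, f, if_neg hx, if_neg hy]
    exact Reachable.single ⟨g, ⟨hg, hge⟩, hgE⟩

end Reachable

section Degree

lemma deg_insert [DecidableEq V] [Finite E] {g : E} (hg : g ∉ S) (y : V) :
    G.deg (insert g S) y = G.deg S y + if y ∈ G.ends g then 1 else 0 := by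
  change (insert g S ∩ {e | y ∈ G.ends e}).ncard = (S ∩ {e | y ∈ G.ends e}).ncard + _
  split_ifs with hy
  · rw [Set.insert_inter_of_mem (s := S) hy, Set.ncard_insert_of_notMem fun h => hg h.1]
  · rw [Set.insert_inter_of_notMem (s := S) hy, add_zero]

lemma ite_mem_mk [DecidableEq V] (hab : a ≠ b) (y : V) :
    (if y ∈ s(a, b) then 1 else 0 : ℕ) = (if y = a then 1 else 0) + if y = b then 1 else 0 := by
  by_cases ha : y = a
  · subst ha
    simp [hab]
  · simp [ha]

lemma deg_eq_zero_of_forall_notMem (hu : ∀ g ∈ S, u ∉ G.ends g) : G.deg S u = 0 := by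
  rw [deg, show G.incEdges S u = ∅ from Set.eq_empty_of_forall_notMem fun g hg => hu g hg.1 hg.2,
    Set.ncard_empty]

lemma deg_image {V' E' : Type*} {H : Multigraph V' E'} {f : V → V'} {φ : E → E'}
    (hφ : ∀ g, H.ends (φ g) = (G.ends g).map f) (hf : f.Injective) (hφi : φ.Injective)
    (S : Set E) (y : V) : H.deg (φ '' S) (f y) = G.deg S y := by
  have : H.incEdges (φ '' S) (f y) = φ '' G.incEdges S y := by
    ext g'
    constructor
    · rintro ⟨⟨g, hg, rfl⟩, hy⟩
      exact ⟨g, ⟨hg, (Sym2.mem_map_iff_of_injective hf).mp (hφ g ▸ hy)⟩, rfl⟩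
    · rintro ⟨g, ⟨hg, hy⟩, rfl⟩
      exact ⟨⟨g, hg, rfl⟩, (hφ g).symm ▸ (Sym2.mem_map_iff_of_injective hf).mpr hy⟩
  rw [deg, deg, this, Set.ncard_image_of_injective _ hφi]

end Degree

section Congr

variable {G' : Multigraph V E} (h : ∀ g ∈ S, G.ends g = G'.ends g)
include h

lemma Reachable.congr (hab : G.Reachable S a b) : G'.Reachable S a b :=
  Relation.ReflTransGen.mono (fun _ _ ⟨g, hg, hgE⟩ => ⟨g, hg, (h g hg).symm.trans hgE⟩) _ _ hab

lemma IsSpanningTree.congr (hS : G.IsSpanningTree S) : G'.IsSpanningTree S := by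
  refine ⟨fun a b => (hS.1 a b).congr h, fun g hg a b hgE hab => ?_⟩
  exact hS.2 g hg a b ((h g hg).trans hgE) (hab.congr fun g' hg' => (h g' hg'.1).symm)

lemma deg_congr (y : V) : G.deg S y = G'.deg S y := by
  unfold deg incEdges
  congr 1
  ext g
  exact and_congr_right fun hg => by rw [h g hg]

end Congr

section Equiv

variable {V' E' : Type*} {H : Multigraph V' E'} {eV : V ≃ V'} {eE : E ≃ E'}
  (h : ∀ g, H.ends (eE g) = (G.ends g).map eV)
include h

lemma ends_symm_of_equiv (g : E') : G.ends (eE.symm g) = (H.ends g).map eV.symm := by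
  rw [← eE.apply_symm_apply g, h, Sym2.map_map]
  simp

lemma IsSpanningTree.image_equiv (hS : G.IsSpanningTree S) : H.IsSpanningTree (eE '' S) :=
  ⟨fun a b => by simpa using (hS.1 (eV.symm a) (eV.symm b)).map h,
    Acyclic.of_map (ends_symm_of_equiv h) eE.symm.injective hS.2 (by simp)⟩

lemma GoodDecomp.image_equiv {c : ℕ} {A : Set E} (hA : G.GoodDecomp c A) :
    H.GoodDecomp c (eE '' A) := by
  obtain ⟨G1, G2, hun, hdisj, hbal, hT1, hT2⟩ := hA
  refine ⟨eE '' G1, eE '' G2, by rw [← Set.image_union, hun, Set.image_univ_of_surjective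
    eE.surjective], (Set.disjoint_image_iff eE.injective).mpr hdisj, fun y => ?_, ?_, ?_⟩
  · rw [← eV.apply_symm_apply y, deg_image h eV.injective eE.injective,
      deg_image h eV.injective eE.injective]
    exact hbal (eV.symm y)
  · simpa [← Set.image_inter eE.injective] using hT1.image_equiv h
  · simpa [← Set.image_inter eE.injective] using hT2.image_equiv h

lemma AMCounterexample.image_equiv {c : ℕ} {A M : Set E} (hG : G.AMCounterexample c A M) :
    H.AMCounterexample c (eE '' A) (eE '' M) := by
  obtain ⟨hun, hdisj, ⟨T1, T2, rfl, hT, hT1, hT2⟩, hbad⟩ := hG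
  refine ⟨by rw [← Set.image_union, hun, Set.image_univ_of_surjective eE.surjective],
    (Set.disjoint_image_iff eE.injective).mpr hdisj,
    ⟨eE '' T1, eE '' T2, (Set.image_union _ _ _).symm,
      (Set.disjoint_image_iff eE.injective).mpr hT, hT1.image_equiv h, hT2.image_equiv h⟩,
    fun hgood => hbad ?_⟩
  simpa using hgood.image_equiv (ends_symm_of_equiv h)

end Equiv

def mapEquiv {V' E' : Type*} (G : Multigraph V E) (eV : V ≃ V') (eE : E ≃ E') :
    Multigraph V' E' where
  ends g := (G.ends (eE.symm g)).map eV
  loopless g := by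
    rw [Sym2.isDiag_map eV.injective]
    exact G.loopless _

def ExistsSmallerCounterexample (c k N : ℕ) : Prop :=
  ∃ (n' m' : ℕ) (G' : Multigraph (Fin n') (Fin m')) (A' M' : Set (Fin m')),
    G'.AMCounterexample c A' M' ∧ (M'.ncard < k ∨ M'.ncard = k ∧ n' < N)

lemma AMCounterexample.existsSmallerCounterexample_of_lt [Fintype V] [Fintype E] {c k N : ℕ}
    {A M : Set E} (hG : G.AMCounterexample c A M)
    (hlt : M.ncard < k ∨ M.ncard = k ∧ Fintype.card V < N) : ExistsSmallerCounterexample c k N :=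
  ⟨_, _, G.mapEquiv (Fintype.equivFin V) (Fintype.equivFin E), _, _,
    hG.image_equiv (eV := Fintype.equivFin V) fun g => by simp [mapEquiv],
    Set.ncard_image_of_injective _ (Fintype.equivFin E).injective ▸ hlt⟩

section MoveEdge

variable [DecidableEq E]

def moveEdge (G : Multigraph V E) (e : E) (a b : V) (hab : a ≠ b) : Multigraph V E where
  ends := Function.update G.ends e s(a, b)
  loopless g := by
    rcases eq_or_ne g e with rfl | hg
    · simpa using hab
    · simpa [hg] using G.loopless g

variable {e : E} {hab : a ≠ b}

@[simp] lemma moveEdge_ends_self : (G.moveEdge e a b hab).ends e = s(a, b) := by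
  simp [moveEdge]

lemma moveEdge_ends_of_ne {g : E} (hg : g ≠ e) : (G.moveEdge e a b hab).ends g = G.ends g := by
  simp [moveEdge, hg]

lemma moveEdge_ends_eq_of_notMem (he : e ∉ S) :
    ∀ g ∈ S, (G.moveEdge e a b hab).ends g = G.ends g :=
  fun _ hg => moveEdge_ends_of_ne (ne_of_mem_of_not_mem hg he)

lemma deg_moveEdge_add [DecidableEq V] [Finite E] (he : e ∈ S) (y : V) :
    (G.moveEdge e a b hab).deg S y + (if y ∈ G.ends e then 1 else 0) =
      G.deg S y + if y ∈ s(a, b) then 1 else 0 := by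
  have hS : S = insert e (S \ {e}) := by rw [Set.insert_sdiff_singleton, Set.insert_eq_of_mem he]
  have hne : e ∉ S \ {e} := fun h => h.2 rfl
  rw [hS, deg_insert hne, deg_insert hne, moveEdge_ends_self,
    deg_congr (moveEdge_ends_eq_of_notMem hne)]
  ring

end MoveEdge

section DeleteVertex

/-- `G - u` restricted to the edges `F`; a smaller `F` deletes further edges. -/
def deleteVertex (G : Multigraph V E) (u : V) (F : Set E) (hF : ∀ g ∈ F, u ∉ G.ends g) :
    Multigraph {y // y ≠ u} F where
  ends g := (G.ends g).attachWith fun _ hy hyu => hF g g.2 (hyu ▸ hy)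
  loopless g := by
    rw [← Sym2.isDiag_map Subtype.val_injective, Sym2.attachWith_map_subtypeVal]
    exact G.loopless g

variable {F : Set E} {hF : ∀ g ∈ F, u ∉ G.ends g}

@[simp] lemma deleteVertex_ends_map (g : F) :
    ((G.deleteVertex u F hF).ends g).map Subtype.val = G.ends g :=
  Sym2.attachWith_map_subtypeVal _

lemma deleteVertex_ends_eq {g : F} {a b : {y // y ≠ u}} :
    (G.deleteVertex u F hF).ends g = s(a, b) ↔ G.ends g = s(a.1, b.1) := by
  rw [← deleteVertex_ends_map, ← Sym2.map_mk]
  exact (Sym2.map.injective Subtype.val_injective).eq_iff.symm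

lemma reachable_deleteVertex_iff {K : Set F} {a b : {y // y ≠ u}} :
    (G.deleteVertex u F hF).Reachable K a b ↔ G.Reachable (Subtype.val '' K) a b := by
  refine ⟨Reachable.map fun g => (deleteVertex_ends_map g).symm, fun h => ?_⟩
  classical
  let r : V → {y // y ≠ u} := fun y => if hy : y = u then a else ⟨y, hy⟩
  suffices (G.deleteVertex u F hF).Reachable K (r a) (r b) by simpa [r, a.2, b.2] using this
  refine Relation.ReflTransGen.lift r (fun x y ⟨_, ⟨g, hg, rfl⟩, hgE⟩ => ?_) _ _ h
  have hx : x ≠ u := fun hx => hF g g.2 (hgE ▸ hx ▸ Sym2.mem_mk_left x y)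
  have hy : y ≠ u := fun hy => hF g g.2 (hgE ▸ hy ▸ Sym2.mem_mk_right x y)
  exact ⟨g, hg, by simpa [r, hx, hy, deleteVertex_ends_eq] using hgE⟩

lemma deg_image_val {K : Set F} {y : V} (hy : y ≠ u) :
    G.deg (Subtype.val '' K) y = (G.deleteVertex u F hF).deg K ⟨y, hy⟩ :=
  deg_image (fun g => (deleteVertex_ends_map (hF := hF) g).symm) Subtype.val_injective
    Subtype.val_injective K ⟨y, hy⟩

lemma deg_image_val_self (hF : ∀ g ∈ F, u ∉ G.ends g) (K : Set F) :
    G.deg (Subtype.val '' K) u = 0 :=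
  deg_eq_zero_of_forall_notMem fun _ ⟨g, _, hg⟩ => hg ▸ hF g g.2

lemma Balanced.image_val {c : ℕ} {K1 K2 : Set F}
    (hK : (G.deleteVertex u F hF).Balanced c K1 K2) :
    G.Balanced c (Subtype.val '' K1) (Subtype.val '' K2) := fun y => by
  by_cases hy : y = u
  · simp [hy, deg_image_val_self hF]
  · rw [deg_image_val hy, deg_image_val hy]
    exact hK _

lemma IsSpanningTree.deleteVertex (hS : G.IsSpanningTree S) {e0 : E}
    (he0 : G.ends e0 = s(u, v)) (hu : ∀ g ∈ S, u ∈ G.ends g → g = e0) (hSF : S \ {e0} ⊆ F) :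
    (G.deleteVertex u F hF).IsSpanningTree {g | g.1 ∈ S} := by
  refine ⟨fun a b => reachable_deleteVertex_iff.mpr ?_, ?_⟩
  · refine ((hS.1 a b).sdiff_of_unique he0 hu a.2 b.2).mono fun g hg => ?_
    exact ⟨⟨g, hSF hg⟩, hg.1, rfl⟩
  · exact Acyclic.of_map (fun g => (deleteVertex_ends_map g).symm) Subtype.val_injective hS.2
      (Set.image_subset_iff.mpr fun _ hg => hg)

lemma IsSpanningTree.insert_image_val {K : Set F}
    (hK : (G.deleteVertex u F hF).IsSpanningTree K) {e0 : E} (he0 : G.ends e0 = s(u, v)) :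
    G.IsSpanningTree (insert e0 (Subtype.val '' K)) := by
  have hvu : v ≠ u := (ne_of_ends_eq he0).symm
  have hKu : ∀ g ∈ Subtype.val '' K, u ∉ G.ends g := fun _ ⟨g, _, hg⟩ => hg ▸ hF g g.2
  have hto_v : ∀ a, G.Reachable (insert e0 (Subtype.val '' K)) a v := by
    intro a
    by_cases ha : a = u
    · exact ha ▸ Reachable.single ⟨e0, Set.mem_insert _ _, he0⟩
    · exact (reachable_deleteVertex_iff.mp (hK.1 ⟨a, ha⟩ ⟨v, hvu⟩)).mono
        (Set.subset_insert _ _)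
  refine ⟨fun a b => (hto_v a).trans (hto_v b).symm, ?_⟩
  rintro g (rfl | ⟨g, hg, rfl⟩) a b hgE hab
  · have hsub : insert g (Subtype.val '' K) \ {g} ⊆ Subtype.val '' K := by simp
    rcases Sym2.eq_iff.mp (hgE.symm.trans he0) with ⟨rfl, rfl⟩ | ⟨rfl, rfl⟩
    · exact hvu ((hab.mono hsub).eq_of_forall_notMem hKu)
    · exact hvu ((hab.symm.mono hsub).eq_of_forall_notMem hKu)
  · have ha : a ≠ u := fun ha => hF g g.2 (hgE ▸ ha ▸ Sym2.mem_mk_left a b)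
    have hb : b ≠ u := fun hb => hF g g.2 (hgE ▸ hb ▸ Sym2.mem_mk_right a b)
    have hu : ∀ g' ∈ insert e0 (Subtype.val '' K) \ {g.1}, u ∈ G.ends g' → g' = e0 :=
      fun g' hg' hug' => hg'.1.resolve_right fun h => hKu g' h hug'
    refine hK.2 g hg ⟨a, ha⟩ ⟨b, hb⟩ (deleteVertex_ends_eq.mpr hgE)
      (reachable_deleteVertex_iff.mpr ((hab.sdiff_of_unique he0 hu ha hb).mono ?_))
    rintro _ ⟨⟨rfl | ⟨g', hg', rfl⟩, hne⟩, hne0⟩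
    · exact absurd rfl hne0
    · exact ⟨g', ⟨hg', fun h => hne (congrArg Subtype.val h)⟩, rfl⟩

end DeleteVertex

section Lift

/-- The body of `GoodDecomp` for given classes `G1, G2`. -/
def IsGoodDecomp (G : Multigraph V E) (c : ℕ) (A G1 G2 : Set E) : Prop :=
  G1 ∪ G2 = Set.univ ∧ Disjoint G1 G2 ∧ G.Balanced c G1 G2 ∧
    G.IsSpanningTree (A ∩ G1) ∧ G.IsSpanningTree (A ∩ G2)

lemma IsGoodDecomp.symm {c : ℕ} {A G1 G2 : Set E} (h : G.IsGoodDecomp c A G1 G2) :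
    G.IsGoodDecomp c A G2 G1 :=
  ⟨by rw [Set.union_comm, h.1], h.2.1.symm, fun y => by rw [abs_sub_comm]; exact h.2.2.1 y,
    h.2.2.2.2, h.2.2.2.1⟩

variable {A F P P1 P2 : Set E}

lemma notMem_image_val {g : E} (hg : g ∉ F) (K : Set F) : g ∉ Subtype.val '' K :=
  fun h => hg (Subtype.coe_image_subset _ K h)

lemma inter_union_image_val {e0 : E} (hP : A ∩ P = {e0}) (K : Set F) :
    A ∩ (P ∪ Subtype.val '' K) = insert e0 (Subtype.val '' ({g | g.1 ∈ A} ∩ K)) := by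
  rw [Set.inter_union_distrib_left, hP, Set.singleton_union]
  exact congrArg _ (Set.image_preimage_inter _ _ _).symm

lemma union_image_val_eq_univ (hP : P1 ∪ P2 = Fᶜ) {K1 K2 : Set F} (hK : K1 ∪ K2 = Set.univ) :
    (P1 ∪ Subtype.val '' K1) ∪ (P2 ∪ Subtype.val '' K2) = Set.univ := by
  have : Subtype.val '' K1 ∪ Subtype.val '' K2 = F := by
    rw [← Set.image_union, hK, Set.image_univ, Subtype.range_coe]
  rw [Set.union_union_union_comm, hP, this, Set.compl_union_self]

lemma disjoint_union_image_val (hP : P1 ∪ P2 = Fᶜ) (hPd : Disjoint P1 P2) {K1 K2 : Set F}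
    (hK : Disjoint K1 K2) : Disjoint (P1 ∪ Subtype.val '' K1) (P2 ∪ Subtype.val '' K2) := by
  have hPF : ∀ {Q}, Q ⊆ Fᶜ → ∀ K : Set F, Disjoint Q (Subtype.val '' K) := fun hQ K =>
    Set.disjoint_of_subset_left hQ (Set.disjoint_compl_left_iff_subset.mpr
      (Subtype.coe_image_subset _ K))
  simp only [Set.disjoint_union_left, Set.disjoint_union_right]
  exact ⟨⟨hPd, (hPF (hP ▸ Set.subset_union_right) K1).symm⟩, hPF (hP ▸ Set.subset_union_left) K2,
    (Set.disjoint_image_iff Subtype.val_injective).mpr hK⟩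

/-- The classes gain `P1, P2`, whose `A`-edges `e1, e2` reattach `u` as a leaf of each tree. -/
lemma GoodDecomp.of_deleteVertex {G₀ : Multigraph V E} {c : ℕ} {hF : ∀ g ∈ F, u ∉ G₀.ends g}
    (hA : ∀ g ∈ A, G₀.ends g = G.ends g) {K1 K2 : Set F}
    (hK : (G₀.deleteVertex u F hF).IsGoodDecomp c {g | g.1 ∈ A} K1 K2)
    (hP : P1 ∪ P2 = Fᶜ) (hPd : Disjoint P1 P2) {e1 e2 : E} {w : V}
    (hP1 : A ∩ P1 = {e1}) (hP2 : A ∩ P2 = {e2}) (hE1 : G₀.ends e1 = s(u, v))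
    (hE2 : G₀.ends e2 = s(u, w))
    (hbal : G.Balanced c (P1 ∪ Subtype.val '' K1) (P2 ∪ Subtype.val '' K2)) :
    G.GoodDecomp c A :=
  ⟨_, _, union_image_val_eq_univ hP hK.1, disjoint_union_image_val hP hPd hK.2.1, hbal,
    (inter_union_image_val hP1 K1 ▸ hK.2.2.2.1.insert_image_val hE1).congr fun g hg => hA g hg.1,
    (inter_union_image_val hP2 K2 ▸ hK.2.2.2.2.insert_image_val hE2).congr fun g hg => hA g hg.1⟩

variable [DecidableEq V] [Finite E] {c : ℕ} {x : V} {e1 e2 e : E} {S1 S2 : Set E}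

lemma Balanced.union_of_deleteEdge (hc : 2 ≤ c) (hE1 : G.ends e1 = s(u, v))
    (hE2 : G.ends e2 = s(u, x)) (hE : G.ends e = s(v, x)) (he1 : e1 ∉ S1) (he : e ∉ S1)
    (he2 : e2 ∉ S2) (hS : G.Balanced c S1 S2) (hv : G.deg S1 v ≤ G.deg S2 v) :
    G.Balanced c ({e1, e} ∪ S1) ({e2} ∪ S2) := by
  have huv := ne_of_ends_eq hE1
  have hux := ne_of_ends_eq hE2
  have hvx := ne_of_ends_eq hE
  have hee1 : e ≠ e1 := by
    rintro rfl
    rcases Sym2.eq_iff.mp (hE1.symm.trans hE) with ⟨h, -⟩ | ⟨h, -⟩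
    exacts [huv h, hux h]
  intro y
  obtain ⟨hb1, hb2⟩ := abs_le.mp (hS y)
  rw [Set.insert_union, Set.singleton_union, Set.singleton_union,
    deg_insert (by rintro (h | h); exacts [hee1 h.symm, he1 h]), deg_insert he, deg_insert he2,
    hE, hE1, hE2, ite_mem_mk huv, ite_mem_mk hux, ite_mem_mk hvx, abs_le]
  by_cases hyv : y = v
  · subst hyv
    simp only [huv.symm, hvx, if_true, if_false]
    omega
  · simp only [hyv, if_false]
    omega

lemma Balanced.union_of_moveEdge [DecidableEq E] {w : V} (hwx : w ≠ x)
    (hE1 : G.ends e1 = s(u, v)) (hE2 : G.ends e2 = s(u, w)) (hE : G.ends e = s(v, x))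
    (he : e ∈ S1) (he2 : e2 ∉ S1) (heS2 : e ∉ S2) (he1 : e1 ∉ S2)
    (hS : (G.moveEdge e w x hwx).Balanced c S1 S2) :
    G.Balanced c ({e2} ∪ S1) ({e1} ∪ S2) := by
  intro y
  have h1 := deg_moveEdge_add (G := G) (hab := hwx) he y
  have h2 := deg_congr (moveEdge_ends_eq_of_notMem (G := G) (hab := hwx) heS2) y
  obtain ⟨hb1, hb2⟩ := abs_le.mp (hS y)
  rw [hE, ite_mem_mk (ne_of_ends_eq hE), ite_mem_mk hwx] at h1
  rw [Set.singleton_union, Set.singleton_union, deg_insert he2, deg_insert he1, hE1, hE2,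
    ite_mem_mk (ne_of_ends_eq hE1), ite_mem_mk (ne_of_ends_eq hE2), abs_le]
  omega

end Lift

structure DoubleLeaf (G : Multigraph V E) (A M T1 T2 : Set E) (u v w : V) (e1 e2 : E) :
    Prop where
  union_AM : A ∪ M = Set.univ
  disjoint_AM : Disjoint A M
  union_T : T1 ∪ T2 = A
  disjoint_T : Disjoint T1 T2
  isSpanningTree_T1 : G.IsSpanningTree T1
  isSpanningTree_T2 : G.IsSpanningTree T2
  mem_T1 : e1 ∈ T1
  mem_T2 : e2 ∈ T2
  ends_e1 : G.ends e1 = s(u, v)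
  ends_e2 : G.ends e2 = s(u, w)
  eq_of_mem_ends : ∀ g, u ∈ G.ends g → g = e1 ∨ g = e2

lemma exists_leaf_edges [Finite E] {T1 T2 : Set E} (hT1 : G.IsSpanningTree T1)
    (hT2 : G.IsSpanningTree T2) (hT : Disjoint T1 T2) (hu : G.deg Set.univ u = 2)
    (huv : u ≠ v) : ∃ e1 ∈ T1, ∃ e2 ∈ T2, ∀ g, u ∈ G.ends g ↔ g = e1 ∨ g = e2 := by
  obtain ⟨e1, he1, hue1⟩ := exists_mem_ends_of_connected hT1.1 huv
  obtain ⟨e2, he2, hue2⟩ := exists_mem_ends_of_connected hT2.1 huv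
  have hinc : {e1, e2} = G.incEdges Set.univ u := by
    refine Set.eq_of_subset_of_ncard_le ?_ ?_
    · rintro g (rfl | rfl)
      exacts [⟨trivial, hue1⟩, ⟨trivial, hue2⟩]
    · rw [← deg, hu, Set.ncard_pair fun h12 : e1 = e2 => hT.notMem_of_mem_left he1 (h12 ▸ he2)]
  exact ⟨e1, he1, e2, he2, fun g => by simpa [incEdges] using (Set.ext_iff.mp hinc g).symm⟩

namespace DoubleLeaf

variable {c : ℕ} {A M T1 T2 : Set E} {w : V} {e1 e2 e : E}
  (h : G.DoubleLeaf A M T1 T2 u v w e1 e2)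
include h

lemma symm : G.DoubleLeaf A M T2 T1 u w v e2 e1 :=
  ⟨h.union_AM, h.disjoint_AM, Set.union_comm T1 T2 ▸ h.union_T, h.disjoint_T.symm,
    h.isSpanningTree_T2, h.isSpanningTree_T1, h.mem_T2, h.mem_T1, h.ends_e2, h.ends_e1,
    fun g hg => (h.eq_of_mem_ends g hg).symm⟩

lemma ne : e1 ≠ e2 := fun h12 => h.disjoint_T.notMem_of_mem_left h.mem_T1 (h12 ▸ h.mem_T2)

lemma mem_A_e1 : e1 ∈ A := h.union_T ▸ Or.inl h.mem_T1

lemma mem_A_e2 : e2 ∈ A := h.union_T ▸ Or.inr h.mem_T2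

lemma notMem_ends_of_mem_M (he : e ∈ M) : u ∉ G.ends e := fun hu =>
  (h.eq_of_mem_ends e hu).elim (fun h1 => h.disjoint_AM.notMem_of_mem_right he (h1 ▸ h.mem_A_e1))
    fun h2 => h.disjoint_AM.notMem_of_mem_right he (h2 ▸ h.mem_A_e2)

lemma isSpanningTree_deleteVertex_T1 {F : Set E} {hF : ∀ g ∈ F, u ∉ G.ends g}
    (hAF : A \ {e1, e2} ⊆ F) : (G.deleteVertex u F hF).IsSpanningTree {g | g.1 ∈ T1} := by
  have hne2 : ∀ g ∈ T1, g ≠ e2 := fun g hg h2 =>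
    h.disjoint_T.notMem_of_mem_left hg (h2 ▸ h.mem_T2)
  refine h.isSpanningTree_T1.deleteVertex h.ends_e1
    (fun g hg hu => (h.eq_of_mem_ends g hu).resolve_right (hne2 g hg)) fun g ⟨hg, hg1⟩ => ?_
  exact hAF ⟨h.union_T ▸ Or.inl hg, by simpa [hne2 g hg] using hg1⟩

lemma amCounterexample_deleteVertex {F : Set E} {hF : ∀ g ∈ F, u ∉ G.ends g}
    (hAF : A \ {e1, e2} ⊆ F) (hbad : ¬ (G.deleteVertex u F hF).GoodDecomp c {g | g.1 ∈ A}) :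
    (G.deleteVertex u F hF).AMCounterexample c {g | g.1 ∈ A} {g | g.1 ∈ M} := by
  refine ⟨Set.eq_univ_of_forall fun g => show g.1 ∈ A ∪ M by rw [h.union_AM]; trivial,
    Set.disjoint_left.mpr fun g hA hM => h.disjoint_AM.notMem_of_mem_left hA hM,
    ⟨{g | g.1 ∈ T1}, {g | g.1 ∈ T2}, ?_, ?_, h.isSpanningTree_deleteVertex_T1 hAF,
      h.symm.isSpanningTree_deleteVertex_T1 (Set.pair_comm e1 e2 ▸ hAF)⟩, hbad⟩
  · ext g
    exact Set.ext_iff.mp h.union_T g.1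
  · exact Set.disjoint_left.mpr fun g h1 h2 => h.disjoint_T.notMem_of_mem_left h1 h2

lemma moveEdge [DecidableEq E] {x : V} (he : e ∉ A) (hw : w ≠ u) (hx : x ≠ u) (hwx : w ≠ x) :
    (G.moveEdge e w x hwx).DoubleLeaf A M T1 T2 u v w e1 e2 := by
  have hT : ∀ g ∈ A, (G.moveEdge e w x hwx).ends g = G.ends g := moveEdge_ends_eq_of_notMem he
  have hsub1 : T1 ⊆ A := h.union_T ▸ Set.subset_union_left
  have hsub2 : T2 ⊆ A := h.union_T ▸ Set.subset_union_right
  refine ⟨h.union_AM, h.disjoint_AM, h.union_T, h.disjoint_T,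
    h.isSpanningTree_T1.congr fun g hg => (hT g (hsub1 hg)).symm,
    h.isSpanningTree_T2.congr fun g hg => (hT g (hsub2 hg)).symm, h.mem_T1, h.mem_T2,
    (hT e1 h.mem_A_e1).trans h.ends_e1, (hT e2 h.mem_A_e2).trans h.ends_e2, fun g hg => ?_⟩
  rcases eq_or_ne g e with rfl | hge
  · rw [moveEdge_ends_self, Sym2.mem_iff] at hg
    exact (hg.elim (fun h' => hw h'.symm) fun h' => hx h'.symm).elim
  · exact h.eq_of_mem_ends g (moveEdge_ends_of_ne hge ▸ hg)

end DoubleLeaf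

section Reduction

variable {c : ℕ} {A M T1 T2 : Set E} {w x : V} {e1 e2 e : E}

lemma ncard_setOf_val_mem (S F : Set E) : {g : F | g.1 ∈ S}.ncard = (S ∩ F).ncard := by
  rw [← Set.ncard_image_of_injective _ Subtype.val_injective]
  congr 1
  ext g
  simp [and_comm]

variable [DecidableEq V] [Finite E]

lemma DoubleLeaf.goodDecomp_of_deleteEdge (hc : 2 ≤ c) (h : G.DoubleLeaf A M T1 T2 u v x e1 e2)
    (heA : e ∉ A) (hE : G.ends e = s(v, x)) (hF : ∀ g ∈ ({e1, e2, e}ᶜ : Set E), u ∉ G.ends g)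
    (hgood : (G.deleteVertex u _ hF).GoodDecomp c {g | g.1 ∈ A}) : G.GoodDecomp c A := by
  have hee2 : e ≠ e2 := fun he2 => heA (he2 ▸ h.mem_A_e2)
  have hlift : ∀ {K1 K2}, (G.deleteVertex u _ hF).IsGoodDecomp c {g | g.1 ∈ A} K1 K2 →
      G.deg (Subtype.val '' K1) v ≤ G.deg (Subtype.val '' K2) v → G.GoodDecomp c A :=
    fun hK hv => GoodDecomp.of_deleteVertex (fun _ _ => rfl) hK (P1 := {e1, e}) (P2 := {e2})
      (by ext g; simp only [compl_compl, Set.mem_union, Set.mem_insert_iff,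
        Set.mem_singleton_iff]; tauto)
      (by simp [h.ne.symm, hee2.symm])
      (by rw [Set.inter_insert_of_mem h.mem_A_e1, Set.inter_singleton_eq_empty.mpr heA,
        insert_empty_eq])
      (Set.inter_eq_right.mpr (Set.singleton_subset_iff.mpr h.mem_A_e2)) h.ends_e1 h.ends_e2
      (hK.2.2.1.image_val.union_of_deleteEdge hc h.ends_e1 h.ends_e2 hE
        (notMem_image_val (g := e1) (by simp) _) (notMem_image_val (g := e) (by simp) _)
        (notMem_image_val (g := e2) (by simp) _) hv)
  obtain ⟨K1, K2, hK⟩ := hgood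
  rcases le_total (G.deg (Subtype.val '' K1) v) (G.deg (Subtype.val '' K2) v) with h1 | h2
  exacts [hlift hK h1, hlift (IsGoodDecomp.symm hK) h2]

lemma DoubleLeaf.goodDecomp_of_moveEdge [DecidableEq E]
    (h : G.DoubleLeaf A M T1 T2 u v w e1 e2) (heA : e ∉ A) (hE : G.ends e = s(v, x)) (hwx : w ≠ x)
    (hF : ∀ g ∈ ({e1, e2}ᶜ : Set E), u ∉ (G.moveEdge e w x hwx).ends g)
    (hgood : ((G.moveEdge e w x hwx).deleteVertex u _ hF).GoodDecomp c {g | g.1 ∈ A}) :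
    G.GoodDecomp c A := by
  have hA := moveEdge_ends_eq_of_notMem (G := G) (hab := hwx) heA
  have heF : e ∈ ({e1, e2}ᶜ : Set E) := by
    rintro (rfl | rfl)
    exacts [heA h.mem_A_e1, heA h.mem_A_e2]
  have hlift : ∀ {K1 K2}, ((G.moveEdge e w x hwx).deleteVertex u _ hF).IsGoodDecomp c
      {g | g.1 ∈ A} K1 K2 → ⟨e, heF⟩ ∈ K1 → G.GoodDecomp c A := fun hK heK =>
    GoodDecomp.of_deleteVertex hA hK (by rw [compl_compl, Set.singleton_union, Set.pair_comm])
      (Set.disjoint_singleton.mpr h.ne.symm)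
      (Set.inter_eq_right.mpr (Set.singleton_subset_iff.mpr h.mem_A_e2))
      (Set.inter_eq_right.mpr (Set.singleton_subset_iff.mpr h.mem_A_e1))
      ((hA e2 h.mem_A_e2).trans h.ends_e2) ((hA e1 h.mem_A_e1).trans h.ends_e1)
      (hK.2.2.1.image_val.union_of_moveEdge hwx h.ends_e1 h.ends_e2 hE ⟨_, heK, rfl⟩
        (notMem_image_val (g := e2) (by simp) _)
        (by rintro ⟨g, hg, rfl⟩; exact hK.2.1.notMem_of_mem_left heK hg)
        (notMem_image_val (g := e1) (by simp) _))
  obtain ⟨K1, K2, hK⟩ := hgood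
  rcases (hK.1 ▸ Set.mem_univ _ : (⟨e, heF⟩ : ({e1, e2}ᶜ : Set E)) ∈ K1 ∪ K2) with h1 | h2
  exacts [hlift hK h1, hlift (IsGoodDecomp.symm hK) h2]

variable [Fintype V] [Fintype E]

lemma DoubleLeaf.existsSmallerCounterexample_of_ne [DecidableEq E]
    (h : G.DoubleLeaf A M T1 T2 u v w e1 e2) (hbad : ¬ G.GoodDecomp c A) (heM : e ∈ M)
    (hE : G.ends e = s(v, x)) (hwx : w ≠ x) :
    ExistsSmallerCounterexample c M.ncard (Fintype.card V) := by
  have heA : e ∉ A := h.disjoint_AM.notMem_of_mem_right heM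
  have hxu : x ≠ u := fun hx => h.notMem_ends_of_mem_M heM (hE ▸ hx ▸ Sym2.mem_mk_right v x)
  have h' := h.moveEdge heA (ne_of_ends_eq h.ends_e2).symm hxu hwx
  have hF : ∀ g ∈ ({e1, e2}ᶜ : Set E), u ∉ (G.moveEdge e w x hwx).ends g :=
    fun g hg hu => hg (by simpa using h'.eq_of_mem_ends g hu)
  have hM : M ⊆ ({e1, e2}ᶜ : Set E) := by
    rintro g hg (rfl | rfl)
    exacts [h.disjoint_AM.notMem_of_mem_left h.mem_A_e1 hg,
      h.disjoint_AM.notMem_of_mem_left h.mem_A_e2 hg]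
  have hgood := mt (h.goodDecomp_of_moveEdge heA hE hwx hF) hbad
  have hcard : {g : ({e1, e2}ᶜ : Set E) | g.1 ∈ M}.ncard = M.ncard := by
    rw [ncard_setOf_val_mem, Set.inter_eq_left.mpr hM]
  classical
  have hH := h'.amCounterexample_deleteVertex (fun g hg => hg.2) hgood
  exact hH.existsSmallerCounterexample_of_lt
    (Or.inr ⟨hcard, Fintype.card_subtype_lt (x := u) (not_not.mpr rfl)⟩)

lemma DoubleLeaf.existsSmallerCounterexample_of_eq (hc : 2 ≤ c)
    (h : G.DoubleLeaf A M T1 T2 u v x e1 e2) (hbad : ¬ G.GoodDecomp c A) (heM : e ∈ M)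
    (hE : G.ends e = s(v, x)) : ExistsSmallerCounterexample c M.ncard (Fintype.card V) := by
  have heA : e ∉ A := h.disjoint_AM.notMem_of_mem_right heM
  have hF : ∀ g ∈ ({e1, e2, e}ᶜ : Set E), u ∉ G.ends g := fun g hg hu =>
    hg (by rcases h.eq_of_mem_ends g hu with rfl | rfl <;> simp)
  have hAF : A \ {e1, e2} ⊆ ({e1, e2, e}ᶜ : Set E) := by
    rintro g ⟨hgA, hg⟩ (h1 | h2 | rfl)
    exacts [hg (Or.inl h1), hg (Or.inr h2), heA hgA]
  have hgood := mt (h.goodDecomp_of_deleteEdge hc heA hE hF) hbad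
  have hcard : {g : ({e1, e2, e}ᶜ : Set E) | g.1 ∈ M}.ncard < M.ncard := by
    rw [ncard_setOf_val_mem]
    exact Set.ncard_lt_ncard ⟨Set.inter_subset_left, fun hsub => (hsub heM).2 (by simp)⟩
  classical
  exact (h.amCounterexample_deleteVertex hAF hgood).existsSmallerCounterexample_of_lt
    (Or.inl hcard)

lemma DoubleLeaf.existsSmallerCounterexample [DecidableEq E] (hc : 2 ≤ c)
    (h : G.DoubleLeaf A M T1 T2 u v w e1 e2) (hbad : ¬ G.GoodDecomp c A) (heM : e ∈ M)
    (hve : v ∈ G.ends e) : ExistsSmallerCounterexample c M.ncard (Fintype.card V) := by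
  obtain ⟨x, hE⟩ := Sym2.mem_iff_exists.mp hve
  rcases eq_or_ne w x with rfl | hwx
  exacts [h.existsSmallerCounterexample_of_eq hc hbad heM hE,
    h.existsSmallerCounterexample_of_ne hbad heM hE hwx]

theorem AMCounterexample.existsSmallerCounterexample_of_deg_eq_two [DecidableEq E] (hc : 2 ≤ c)
    (hG : G.AMCounterexample c A M) (hvu : G.Adj Set.univ v u) (hu : G.deg Set.univ u = 2)
    (heM : e ∈ M) (hve : v ∈ G.ends e) :
    ExistsSmallerCounterexample c M.ncard (Fintype.card V) := by
  obtain ⟨hAM, hAMd, ⟨T1, T2, hA, hT, hT1, hT2⟩, hbad⟩ := hG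
  obtain ⟨g0, -, hg0⟩ := hvu
  obtain ⟨e1, he1, e2, he2, hinc⟩ := exists_leaf_edges hT1 hT2 hT hu (ne_of_ends_eq hg0).symm
  obtain ⟨w1, hE1⟩ := Sym2.mem_iff_exists.mp ((hinc e1).mpr (Or.inl rfl))
  obtain ⟨w2, hE2⟩ := Sym2.mem_iff_exists.mp ((hinc e2).mpr (Or.inr rfl))
  have h : G.DoubleLeaf A M T1 T2 u w1 w2 e1 e2 :=
    ⟨hAM, hAMd, hA, hT, hT1, hT2, he1, he2, hE1, hE2, fun g => (hinc g).mp⟩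
  rcases (hinc g0).mp (hg0 ▸ Sym2.mem_mk_right v u) with rfl | rfl
  · obtain rfl : v = w1 := Sym2.congr_right.mp (Sym2.eq_swap.trans (hg0.symm.trans hE1))
    exact h.existsSmallerCounterexample hc hbad heM hve
  · obtain rfl : v = w2 := Sym2.congr_right.mp (Sym2.eq_swap.trans (hg0.symm.trans hE2))
    exact h.symm.existsSmallerCounterexample hc hbad heM hve

end Reduction

end Multigraph

/-- **Theorem (Statement 15).** Let `G = A + M` be a counterexample (`c ≥ 2`)
with `e(M)` minimal and, subject to this, `|V(G)|` minimal.  Then no vertex is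
both adjacent to a vertex of degree 2 and incident to an edge of `M`. -/
theorem M_edge_not_near_two_vertex (c : ℕ) (hc : 2 ≤ c) (n m : ℕ)
    (G : Multigraph (Fin n) (Fin m)) (A M : Set (Fin m))
    (hcex : G.AMCounterexample c A M)
    (hmin : ∀ (n' m' : ℕ) (G' : Multigraph (Fin n') (Fin m'))
      (A' M' : Set (Fin m')), G'.AMCounterexample c A' M' →
      M.ncard ≤ M'.ncard ∧ (M.ncard = M'.ncard → n ≤ n')) :
    ∀ v : Fin n, (∃ u, G.Adj Set.univ v u ∧ G.deg Set.univ u = 2) →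
      ¬ ∃ e ∈ M, v ∈ G.ends e := by
  rintro v ⟨u, hvu, hu⟩ ⟨e, heM, hve⟩
  obtain ⟨n', m', G', A', M', hG', hlt⟩ :=
    hcex.existsSmallerCounterexample_of_deg_eq_two hc hvu hu heM hve
  have := hmin n' m' G' A' M' hG'
  rw [Fintype.card_fin] at hlt
  omega
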